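/- Let T be a rooted phylogenetic X-tree whose positive edge lengths satisfy the ultrametric condition, let A ⊆ X with |A| = k, and let d be a branching distance of T. If one connected component of the forest T[R(d)] contains no member of A while a second component of T[R(d)] contains two or more distinct members of A, then A is not a size-k maxPD set. -/

import Mathlib

/-!
Rooted phylogenetic `X`-trees with positive edge lengths.

A tree on a finite vertex type `V` is encoded by its parent function: the root
has no parent, every other vertex has one, and iterating the parent function
reaches the root.  The edge into a non-root vertex `v` has length `len v`, and
`hgt v` is the distance from the root to `v`.  Leaves are the vertices with no
children; the taxon set `X` of the paper is the set `leaves` of leaves.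
Every non-leaf, non-root vertex has out-degree (number of children) at least 2.
-/

noncomputable section

attribute [local instance] Classical.propDecidable

structure PhyloTree (V : Type) [Fintype V] [DecidableEq V] where
  root : V
  parent : V → Option V
  len : V → ℝ
  hgt : V → ℝ
  parent_root : parent root = none
  parent_isSome : ∀ v, v ≠ root → (parent v).isSome
  reaches_root : ∀ v, Relation.ReflTransGen (fun a b => parent a = some b) v root
  hgt_root : hgt root = 0
  hgt_eq : ∀ v u, parent v = some u → hgt v = hgt u + len v
  len_pos : ∀ v, v ≠ root → 0 < len v
  outdeg_ge_two : ∀ v, v ≠ root → (∃ u, parent u = some v) →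
    2 ≤ Set.ncard {u | parent u = some v}

namespace PhyloTree

variable {V : Type} [Fintype V] [DecidableEq V]

/-- `T.step a b` : `b` is the parent of `a`. -/
def step (T : PhyloTree V) (a b : V) : Prop := T.parent a = some b

/-- `T.anc u v` : `u` is an ancestor of `v`, i.e. `u` lies on the (unique) path
from the root to `v` (reflexively). -/
def anc (T : PhyloTree V) (u v : V) : Prop := Relation.ReflTransGen T.step v u

/-- a leaf is a vertex with no children. -/
def IsLeaf (T : PhyloTree V) (v : V) : Prop := ∀ u, T.parent u ≠ some v

/-- the leaf set (the taxon set `X`). -/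
def leaves (T : PhyloTree V) : Set V := {v | T.IsLeaf v}

/-- Phylogenetic diversity of a set `Y`: the total length of all edges `e`
whose set of descendant leaves meets `Y` (the edge into a non-root vertex `v`
has length `T.len v`). -/
def PD (T : PhyloTree V) (Y : Set V) : ℝ :=
  ∑ v : V, if v ≠ T.root ∧ ∃ x ∈ Y, T.IsLeaf x ∧ T.anc v x then T.len v else 0

/-- the ultrametric condition: all leaves are at the same distance from the root. -/
def Ultrametric (T : PhyloTree V) : Prop :=
  ∀ x y, T.IsLeaf x → T.IsLeaf y → T.hgt x = T.hgt y

/-- `R d`: the set of vertices within distance `d` above some leaf. -/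
def R (T : PhyloTree V) (d : ℝ) : Set V :=
  {v | ∃ x, T.IsLeaf x ∧ T.anc v x ∧ T.hgt x - T.hgt v ≤ d}

/-- adjacency in the forest induced by `T` on a vertex set `S`. -/
def adjIn (T : PhyloTree V) (S : Set V) (u v : V) : Prop :=
  u ∈ S ∧ v ∈ S ∧ (T.parent u = some v ∨ T.parent v = some u)

/-- the connected components of the forest induced by `T` on `S`. -/
def components (T : PhyloTree V) (S : Set V) : Set (Set V) :=
  {C | ∃ v ∈ S, C = S ∩ {u | Relation.ReflTransGen (T.adjIn S) v u}}

/-- `c d`: the number of connected components of the forest `T[R(d)]`. -/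
def ccount (T : PhyloTree V) (d : ℝ) : ℕ := (T.components (T.R d)).ncard

/-- `k` is a branching value if `T[R(d)]` has exactly `k` components for some `d ≥ 0`. -/
def IsBranchingValue (T : PhyloTree V) (k : ℕ) : Prop := ∃ d : ℝ, 0 ≤ d ∧ T.ccount d = k

/-- the branching distance `d_k = min {d : c(d) = k}`. -/
def branchDist (T : PhyloTree V) (k : ℕ) : ℝ := sInf {d | 0 ≤ d ∧ T.ccount d = k}

/-- `k⁻`: the largest branching value `≤ k`. -/
def kminus (T : PhyloTree V) (k : ℕ) : ℕ := sSup {j | j ≤ k ∧ T.IsBranchingValue j}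

/-- `k⁺`: the smallest branching value `≥ k`. -/
def kplus (T : PhyloTree V) (k : ℕ) : ℕ := sInf {j | k ≤ j ∧ T.IsBranchingValue j}

/-- `A` is a size-`k` maxPD set. -/
def IsMaxPD (T : PhyloTree V) (k : ℕ) (A : Set V) : Prop :=
  A ⊆ T.leaves ∧ A.ncard = k ∧ ∀ Y ⊆ T.leaves, Y.ncard = k → T.PD Y ≤ T.PD A

/-- `A` is a size-`k` minPD set. -/
def IsMinPD (T : PhyloTree V) (k : ℕ) (A : Set V) : Prop :=
  A ⊆ T.leaves ∧ A.ncard = k ∧ ∀ Y ⊆ T.leaves, Y.ncard = k → T.PD A ≤ T.PD Y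

/-- `m T k`: the number of size-`k` maxPD sets of `T`. -/
def m (T : PhyloTree V) (k : ℕ) : ℕ := {A : Set V | T.IsMaxPD k A}.ncard

/-- `T` is binary: every non-leaf vertex has exactly two children. -/
def Binary (T : PhyloTree V) : Prop :=
  ∀ v, ¬ T.IsLeaf v → Set.ncard {u | T.parent u = some v} = 2

end PhyloTree

/-!
Pick a leaf `z` in the component avoiding `A`, and let `u` be the deepest ancestor of `z` above
some member of `A`. Were `u` in `R(d)`, ultrametricity would join `z` to that member of `A`
inside `R(d)`; hence the path from `u` down to `z` is longer than `d`, and none of its edges is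
counted in `PD(A)`. On the other hand two members `x ≠ y` of `A` lie in one component, so they
have a common ancestor `w ∈ R(d)` and the path from `w` to `y` has length at most `d`. Replacing
`y` by `z` loses at most the edges of the path from `w` to `y` and gains all edges of the path
from `u` to `z`, so it strictly increases `PD`.
-/

namespace PhyloTree

variable {V : Type} [Fintype V] [DecidableEq V] (T : PhyloTree V)

section Ancestry

lemma ne_root_of_step {a b : V} (h : T.step a b) : a ≠ T.root := by
  rintro rfl
  simp [step, T.parent_root] at h

lemma hgt_le_of_anc {u v : V} (h : T.anc u v) : T.hgt u ≤ T.hgt v := by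
  induction h with
  | refl => exact le_rfl
  | tail _ hstep ih =>
    linarith [T.hgt_eq _ _ hstep, T.len_pos _ (T.ne_root_of_step hstep)]

lemma hgt_lt_of_anc {u v : V} (h : T.anc u v) (hne : u ≠ v) : T.hgt u < T.hgt v := by
  rcases Relation.ReflTransGen.cases_head h with h | ⟨c, hc, hcu⟩
  · exact absurd h.symm hne
  · linarith [T.hgt_eq _ _ hc, T.len_pos _ (T.ne_root_of_step hc), T.hgt_le_of_anc hcu]

lemma anc_trans {a b c : V} (h₁ : T.anc a b) (h₂ : T.anc b c) : T.anc a c :=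
  Relation.ReflTransGen.trans h₂ h₁

lemma anc_antisymm {a b : V} (h₁ : T.anc a b) (h₂ : T.anc b a) : a = b := by
  by_contra hne
  linarith [T.hgt_lt_of_anc h₁ hne, T.hgt_lt_of_anc h₂ (Ne.symm hne)]

lemma anc_or_anc_of_anc {a b v : V} (ha : T.anc a v) (hb : T.anc b v) :
    T.anc a b ∨ T.anc b a := by
  induction ha using Relation.ReflTransGen.head_induction_on with
  | refl => exact Or.inr hb
  | head hv _ ih =>
    rcases Relation.ReflTransGen.cases_head hb with rfl | ⟨c, hc, hcb⟩
    · exact Or.inl (Relation.ReflTransGen.head hv ‹_›)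
    · cases (hc.symm.trans hv : some c = some _)
      exact ih hcb

lemma ne_root_of_anc_of_ne {w p : V} (h : T.anc w p) (hne : p ≠ w) : p ≠ T.root := by
  rcases Relation.ReflTransGen.cases_head h with h | ⟨c, hc, _⟩
  · exact absurd h hne
  · exact T.ne_root_of_step hc

end Ancestry

section PathsAndDiversity

/-- The edges of the path from `w` down to `v`, each named by its lower end. -/
def pathEdges (w v : V) : Finset V :=
  Finset.univ.filter fun p => T.anc w p ∧ T.anc p v ∧ p ≠ w

/-- The edges counted by `PD Y`, each named by its lower end. -/
def pdEdges (Y : Set V) : Finset V :=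
  Finset.univ.filter fun v => v ≠ T.root ∧ ∃ x ∈ Y, T.IsLeaf x ∧ T.anc v x

lemma ne_root_of_mem_pathEdges {w v p : V} (hp : p ∈ T.pathEdges w v) : p ≠ T.root := by
  simp only [pathEdges, Finset.mem_filter] at hp
  exact T.ne_root_of_anc_of_ne hp.2.1 hp.2.2.2

lemma ne_root_of_mem_pdEdges {Y : Set V} {v : V} (hv : v ∈ T.pdEdges Y) : v ≠ T.root :=
  (Finset.mem_filter.mp hv).2.1

lemma PD_eq_sum_pdEdges (Y : Set V) : T.PD Y = ∑ v ∈ T.pdEdges Y, T.len v := by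
  rw [PD, pdEdges, Finset.sum_filter]

lemma pathEdges_self (w : V) : T.pathEdges w w = ∅ := by
  ext p
  simp only [pathEdges, Finset.mem_filter, Finset.mem_univ, true_and, Finset.notMem_empty,
    iff_false, not_and]
  exact fun hwp hpw => absurd (T.anc_antisymm hpw hwp)

lemma pathEdges_of_step {w v c : V} (hvc : T.step v c) (hwc : T.anc w c) :
    T.pathEdges w v = insert v (T.pathEdges w c) := by
  have hwv : T.anc w v := Relation.ReflTransGen.head hvc hwc
  have hvw : v ≠ w := by
    rintro rfl
    linarith [T.hgt_le_of_anc hwc, T.hgt_eq _ _ hvc, T.len_pos _ (T.ne_root_of_step hvc)]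
  ext p
  simp only [pathEdges, Finset.mem_insert, Finset.mem_filter, Finset.mem_univ, true_and]
  constructor
  · rintro ⟨hwp, hpv, hpw⟩
    rcases Relation.ReflTransGen.cases_head hpv with rfl | ⟨c', hc', hc'p⟩
    · exact Or.inl rfl
    · cases (hc'.symm.trans hvc : some c' = some c)
      exact Or.inr ⟨hwp, hc'p, hpw⟩
  · rintro (rfl | ⟨hwp, hpc, hpw⟩)
    · exact ⟨hwv, Relation.ReflTransGen.refl, hvw⟩
    · exact ⟨hwp, Relation.ReflTransGen.head hvc hpc, hpw⟩

lemma sum_len_pathEdges {w v : V} (h : T.anc w v) :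
    ∑ p ∈ T.pathEdges w v, T.len p = T.hgt v - T.hgt w := by
  induction h using Relation.ReflTransGen.head_induction_on with
  | refl => simp [T.pathEdges_self]
  | @head v c hvc hwc ih =>
    have hv : v ∉ T.pathEdges w c := fun hv => by
      simp only [pathEdges, Finset.mem_filter] at hv
      linarith [T.hgt_le_of_anc hv.2.2.1, T.hgt_eq _ _ hvc, T.len_pos _ (T.ne_root_of_step hvc)]
    rw [T.pathEdges_of_step hvc hwc, Finset.sum_insert hv, ih, T.hgt_eq _ _ hvc]
    ring

lemma pdEdges_sdiff_subset_pathEdges {A B : Set V} {x y w : V} (hAB : A \ {y} ⊆ B)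
    (hxB : x ∈ B) (hx : T.IsLeaf x) (hwx : T.anc w x) (hwy : T.anc w y) :
    T.pdEdges A \ T.pdEdges B ⊆ T.pathEdges w y := by
  intro v hv
  simp only [pdEdges, pathEdges, Finset.mem_sdiff, Finset.mem_filter, Finset.mem_univ,
    true_and, not_and, not_exists] at hv ⊢
  obtain ⟨⟨hvroot, a, haA, ha, hva⟩, hvB⟩ := hv
  have hay : a = y := by
    by_contra hay
    exact hvB hvroot a (hAB ⟨haA, hay⟩) ha hva
  subst hay
  have hvx : ¬ T.anc v x := hvB hvroot x hxB hx
  refine ⟨?_, hva, fun hvw => hvx (hvw ▸ hwx)⟩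
  rcases T.anc_or_anc_of_anc hva hwy with hvw | hwv
  · exact absurd (T.anc_trans hvw hwx) hvx
  · exact hwv

lemma pathEdges_subset_pdEdges_sdiff {A B : Set V} {u z : V} (hzB : z ∈ B) (hz : T.IsLeaf z)
    (hdisj : Disjoint (T.pathEdges u z) (T.pdEdges A)) :
    T.pathEdges u z ⊆ T.pdEdges B \ T.pdEdges A := by
  intro p hp
  refine Finset.mem_sdiff.mpr ⟨?_, Finset.disjoint_left.mp hdisj hp⟩
  simp only [pdEdges, Finset.mem_filter, Finset.mem_univ, true_and]
  exact ⟨T.ne_root_of_mem_pathEdges hp, z, hzB, hz, (Finset.mem_filter.mp hp).2.2.1⟩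

lemma PD_lt_PD_of_exchange {A B : Set V} {x y z u w : V} (hAB : A \ {y} ⊆ B)
    (hxB : x ∈ B) (hx : T.IsLeaf x) (hwx : T.anc w x) (hwy : T.anc w y)
    (hzB : z ∈ B) (hz : T.IsLeaf z) (huz : T.anc u z)
    (hdisj : Disjoint (T.pathEdges u z) (T.pdEdges A))
    (hlt : T.hgt y - T.hgt w < T.hgt z - T.hgt u) :
    T.PD A < T.PD B := by
  rw [T.PD_eq_sum_pdEdges, T.PD_eq_sum_pdEdges, ← Finset.sum_sdiff_lt_sum_sdiff]
  calc ∑ v ∈ T.pdEdges A \ T.pdEdges B, T.len v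
      ≤ ∑ v ∈ T.pathEdges w y, T.len v :=
        Finset.sum_le_sum_of_subset_of_nonneg
          (T.pdEdges_sdiff_subset_pathEdges hAB hxB hx hwx hwy)
          fun p hp _ => (T.len_pos p (T.ne_root_of_mem_pathEdges hp)).le
    _ = T.hgt y - T.hgt w := T.sum_len_pathEdges hwy
    _ < T.hgt z - T.hgt u := hlt
    _ = ∑ v ∈ T.pathEdges u z, T.len v := (T.sum_len_pathEdges huz).symm
    _ ≤ ∑ v ∈ T.pdEdges B \ T.pdEdges A, T.len v :=
        Finset.sum_le_sum_of_subset_of_nonneg (T.pathEdges_subset_pdEdges_sdiff hzB hz hdisj)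
          fun p hp _ => (T.len_pos p (T.ne_root_of_mem_pdEdges (Finset.sdiff_subset hp))).le

lemma exists_deepest_anc_above {A : Set V} {a : V} (haA : a ∈ A) (ha : T.IsLeaf a) (z : V) :
    ∃ u, T.anc u z ∧ (∃ b ∈ A, T.IsLeaf b ∧ T.anc u b) ∧
      Disjoint (T.pathEdges u z) (T.pdEdges A) := by
  obtain ⟨u, hu, humax⟩ := Finset.exists_max_image
    (Finset.univ.filter fun p => T.anc p z ∧ ∃ b ∈ A, T.IsLeaf b ∧ T.anc p b) T.hgt
    ⟨T.root, Finset.mem_filter.mpr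
      ⟨Finset.mem_univ _, T.reaches_root z, a, haA, ha, T.reaches_root a⟩⟩
  obtain ⟨huz, hub⟩ := (Finset.mem_filter.mp hu).2
  refine ⟨u, huz, hub, Finset.disjoint_left.mpr fun p hp hpA => ?_⟩
  simp only [pathEdges, pdEdges, Finset.mem_filter, Finset.mem_univ, true_and] at hp hpA
  have := humax p (Finset.mem_filter.mpr ⟨Finset.mem_univ _, hp.2.1, hpA.2⟩)
  linarith [T.hgt_lt_of_anc hp.1 (Ne.symm hp.2.2)]

lemma not_isMaxPD_of_PD_lt {A : Set V} {k : ℕ} {y z : V} (hyA : y ∈ A) (hzA : z ∉ A)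
    (hz : T.IsLeaf z) (hlt : T.PD A < T.PD (insert z (A \ {y}))) :
    ¬ T.IsMaxPD k A := by
  rintro ⟨hA, hcard, hmax⟩
  refine (hmax (insert z (A \ {y})) ?_ ?_).not_gt hlt
  · exact Set.insert_subset hz (Set.sdiff_subset.trans hA)
  · rw [Set.ncard_insert_of_notMem (fun h => hzA h.1), Set.ncard_sdiff_singleton_add_one hyA,
      hcard]

end PathsAndDiversity

section Components

variable {S : Set V}

lemma reflTransGen_adjIn_symm {a b : V} (h : Relation.ReflTransGen (T.adjIn S) a b) :
    Relation.ReflTransGen (T.adjIn S) b a :=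
  Relation.ReflTransGen.mono (fun _ _ ⟨ha, hb, hab⟩ => ⟨hb, ha, hab.symm⟩) _ _
    (Relation.reflTransGen_swap.mpr h)

lemma subset_of_mem_components {C : Set V} (hC : C ∈ T.components S) : C ⊆ S := by
  obtain ⟨v, -, rfl⟩ := hC
  exact Set.inter_subset_left

lemma reflTransGen_of_mem_components {C : Set V} (hC : C ∈ T.components S) {a b : V}
    (ha : a ∈ C) (hb : b ∈ C) : Relation.ReflTransGen (T.adjIn S) a b := by
  obtain ⟨v, -, rfl⟩ := hC
  exact (T.reflTransGen_adjIn_symm ha.2).trans hb.2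

lemma mem_of_mem_components {C : Set V} (hC : C ∈ T.components S) {a b : V} (ha : a ∈ C)
    (hb : b ∈ S) (hab : Relation.ReflTransGen (T.adjIn S) a b) : b ∈ C := by
  obtain ⟨v, -, rfl⟩ := hC
  exact ⟨hb, ha.2.trans hab⟩

lemma exists_common_anc_of_reflTransGen_adjIn {a b : V} (ha : a ∈ S)
    (h : Relation.ReflTransGen (T.adjIn S) a b) : ∃ c ∈ S, T.anc c a ∧ T.anc c b := by
  induction h with
  | refl => exact ⟨a, ha, Relation.ReflTransGen.refl, Relation.ReflTransGen.refl⟩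
  | @tail m b _ hmb ih =>
    obtain ⟨c, hcS, hca, hcm⟩ := ih
    obtain ⟨-, hbS, hmb | hbm⟩ := hmb
    · rcases T.anc_or_anc_of_anc hcm (Relation.ReflTransGen.single hmb) with hcb | hbc
      · exact ⟨c, hcS, hca, hcb⟩
      · exact ⟨b, hbS, T.anc_trans hbc hca, Relation.ReflTransGen.refl⟩
    · exact ⟨c, hcS, hca, T.anc_trans hcm (Relation.ReflTransGen.single hbm)⟩

lemma reflTransGen_adjIn_R_of_anc {d : ℝ} {p z : V} (hz : T.IsLeaf z) (hpz : T.anc p z)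
    (hd : T.hgt z - T.hgt p ≤ d) : Relation.ReflTransGen (T.adjIn (T.R d)) p z := by
  induction hpz with
  | refl => exact Relation.ReflTransGen.refl
  | @tail b p hbz hbp ih =>
    have hb : T.hgt z - T.hgt b ≤ d := by
      linarith [T.hgt_eq _ _ hbp, T.len_pos _ (T.ne_root_of_step hbp)]
    exact Relation.ReflTransGen.head ⟨⟨z, hz, hbz.tail hbp, hd⟩, ⟨z, hz, hbz, hb⟩, Or.inr hbp⟩
      (ih hb)

lemma exists_leaf_mem_of_mem_components_R {d : ℝ} {C : Set V} (hC : C ∈ T.components (T.R d)) :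
    ∃ z ∈ C, T.IsLeaf z := by
  obtain ⟨v, hv, rfl⟩ := hC
  obtain ⟨z, hz, hvz, hd⟩ := hv
  exact ⟨z, ⟨⟨z, hz, Relation.ReflTransGen.refl, by linarith [T.hgt_le_of_anc hvz]⟩,
    T.reflTransGen_adjIn_R_of_anc hz hvz hd⟩, hz⟩

end Components

namespace Ultrametric

variable {T}

lemma hgt_sub_le_of_mem_R (hU : T.Ultrametric) {d : ℝ} {v x : V} (hv : v ∈ T.R d)
    (hx : T.IsLeaf x) : T.hgt x - T.hgt v ≤ d := by
  obtain ⟨z, hz, -, hd⟩ := hv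
  rwa [hU x z hx hz]

lemma lt_hgt_sub_of_anc_of_notMem_component (hU : T.Ultrametric) {d : ℝ} {C : Set V}
    (hC : C ∈ T.components (T.R d)) {z a u : V} (hzC : z ∈ C) (haC : a ∉ C) (hz : T.IsLeaf z)
    (ha : T.IsLeaf a) (huz : T.anc u z) (hua : T.anc u a) : d < T.hgt z - T.hgt u := by
  by_contra! hshort
  have huR : u ∈ T.R d := ⟨z, hz, huz, hshort⟩
  have hzu := T.reflTransGen_adjIn_symm (T.reflTransGen_adjIn_R_of_anc hz huz hshort)
  have hua' := T.reflTransGen_adjIn_R_of_anc ha hua (hU.hgt_sub_le_of_mem_R huR ha)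
  exact haC (T.mem_of_mem_components hC hzC
    ⟨a, ha, Relation.ReflTransGen.refl, by linarith [T.hgt_le_of_anc huz]⟩ (hzu.trans hua'))

end Ultrametric

end PhyloTree

theorem not_isMaxPD_of_empty_component_and_crowded_component_general
    {V : Type} [Fintype V] [DecidableEq V] (T : PhyloTree V)
    (hU : T.Ultrametric) (A : Set V) (hA : A ⊆ T.leaves) (k : ℕ)
    (d : ℝ)
    (C₁ C₂ : Set V)
    (hC₁ : C₁ ∈ T.components (T.R d)) (hC₂ : C₂ ∈ T.components (T.R d))
    (hempty : A ∩ C₁ = ∅)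
    (hcrowded : ∃ x ∈ A ∩ C₂, ∃ y ∈ A ∩ C₂, x ≠ y) :
    ¬ T.IsMaxPD k A := by
  obtain ⟨x, ⟨hxA, hxC⟩, y, ⟨hyA, hyC⟩, hxy⟩ := hcrowded
  have hnotC₁ : ∀ a ∈ A, a ∉ C₁ := fun a haA haC => (hempty ▸ ⟨haA, haC⟩ : a ∈ (∅ : Set V))
  obtain ⟨z, hzC, hz⟩ := T.exists_leaf_mem_of_mem_components_R hC₁
  have hzA : z ∉ A := fun h => hnotC₁ z h hzC
  obtain ⟨w, hwR, hwy, hwx⟩ := T.exists_common_anc_of_reflTransGen_adjIn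
    (T.subset_of_mem_components hC₂ hyC) (T.reflTransGen_of_mem_components hC₂ hyC hxC)
  obtain ⟨u, huz, ⟨a, haA, ha, hua⟩, hdisj⟩ := T.exists_deepest_anc_above hyA (hA hyA) z
  have hlong : d < T.hgt z - T.hgt u :=
    hU.lt_hgt_sub_of_anc_of_notMem_component hC₁ hzC (hnotC₁ a haA) hz ha huz hua
  refine T.not_isMaxPD_of_PD_lt hyA hzA hz (T.PD_lt_PD_of_exchange (x := x) (w := w)
    (Set.subset_insert _ _) (Set.mem_insert_of_mem _ ⟨hxA, hxy⟩) (hA hxA) hwx hwy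
    (Set.mem_insert _ _) hz huz hdisj ?_)
  linarith [hU.hgt_sub_le_of_mem_R hwR (hA hyA)]

/-- Lemma 2 of the paper.  If, for a branching distance `d`,
one component of `T[R(d)]` contains no member of `A` while another component of
`T[R(d)]` contains two or more distinct members of `A`, then `A` is not a
size-`k` maxPD set. -/
theorem not_isMaxPD_of_empty_component_and_crowded_component
    {V : Type} [Fintype V] [DecidableEq V] (T : PhyloTree V)
    (hU : T.Ultrametric) (A : Set V) (hA : A ⊆ T.leaves) (k : ℕ)
    (hcard : A.ncard = k) (d : ℝ)
    (hd : ∃ j : ℕ, T.IsBranchingValue j ∧ d = T.branchDist j)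
    (C₁ C₂ : Set V)
    (hC₁ : C₁ ∈ T.components (T.R d)) (hC₂ : C₂ ∈ T.components (T.R d))
    (hempty : A ∩ C₁ = ∅)
    (hcrowded : ∃ x ∈ A ∩ C₂, ∃ y ∈ A ∩ C₂, x ≠ y) :
    ¬ T.IsMaxPD k A :=
  not_isMaxPD_of_empty_component_and_crowded_component_general T hU A hA k d C₁ C₂ hC₁ hC₂ hempty
    hcrowded
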